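/- Let P be a symmetric positive semidefinite real m×m matrix and let s, y ∈ ℝ^m with sᵀy > 0. Define P⁺ = (I − (y sᵀ)/(sᵀy))ᵀ P (I − (y sᵀ)/(sᵀy)) + (s sᵀ)/(sᵀy). Then λ_max(P⁺) ≤ λ_max(P) · ‖y‖² ‖s‖² / (sᵀy)² + ‖s‖²/(sᵀy). -/

import Mathlib

/-!
With `Q = I - y sᵀ / sᵀy`, the quadratic form of `P⁺` is
`vᵀ P⁺ v = (Q v)ᵀ P (Q v) + (sᵀv)² / sᵀy ≤ λ_max(P) ‖Q v‖² + ‖s‖² ‖v‖² / sᵀy`,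
and `Q` is an oblique projection of norm `‖y‖ ‖s‖ / sᵀy` (a Gram determinant inequality).
Since every eigenvalue is a Rayleigh quotient, this bound on the quadratic form bounds `λ_max(P⁺)`.
-/

open Matrix

/-- The maximum eigenvalue of a (symmetric) real matrix. -/
noncomputable def lamMax {m : ℕ} (A : Matrix (Fin m) (Fin m) ℝ) : ℝ :=
  sSup {r : ℝ | ∃ v : Fin m → ℝ, v ≠ 0 ∧ A.mulVec v = r • v}

namespace Matrix

section DotProduct

variable {n : Type*} [Fintype n]

theorem dotProduct_self_pos {v : n → ℝ} (hv : v ≠ 0) : 0 < v ⬝ᵥ v := by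
  simpa using dotProduct_self_star_pos_iff.mpr hv

theorem dotProduct_self_nonneg (v : n → ℝ) : 0 ≤ v ⬝ᵥ v := by
  simpa using dotProduct_self_star_nonneg v

theorem sq_dotProduct_le (u v : n → ℝ) : (u ⬝ᵥ v) ^ 2 ≤ (u ⬝ᵥ u) * (v ⬝ᵥ v) := by
  simpa only [dotProduct, sq] using Finset.sum_mul_sq_le_sq_mul_sq Finset.univ u v

theorem dotProduct_transpose_mul_mul_mulVec (Q P : Matrix n n ℝ) (v : n → ℝ) :
    v ⬝ᵥ (Qᵀ * P * Q) *ᵥ v = Q *ᵥ v ⬝ᵥ P *ᵥ (Q *ᵥ v) := by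
  rw [← mulVec_mulVec, ← mulVec_mulVec, dotProduct_mulVec, vecMul_transpose]

theorem dotProduct_vecMulVec_mulVec (s v : n → ℝ) : v ⬝ᵥ vecMulVec s s *ᵥ v = (s ⬝ᵥ v) ^ 2 := by
  rw [vecMulVec_mulVec, op_smul_eq_smul, dotProduct_smul, smul_eq_mul, dotProduct_comm v s, sq]

theorem one_sub_smul_vecMulVec_mulVec [DecidableEq n] (c : ℝ) (y s v : n → ℝ) :
    (1 - c • vecMulVec y s) *ᵥ v = v - (c * (s ⬝ᵥ v)) • y := by
  rw [sub_mulVec, one_mulVec, smul_mulVec, vecMulVec_mulVec, op_smul_eq_smul, smul_smul]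

/-- The Gram determinant of `a, b, c`, expanded along the first row. -/
theorem gram_det_three_nonneg (a b c : n → ℝ) :
    0 ≤ (a ⬝ᵥ a) * ((b ⬝ᵥ b) * (c ⬝ᵥ c) - (b ⬝ᵥ c) ^ 2)
      - (a ⬝ᵥ b) * ((a ⬝ᵥ b) * (c ⬝ᵥ c) - (b ⬝ᵥ c) * (a ⬝ᵥ c))
      + (a ⬝ᵥ c) * ((a ⬝ᵥ b) * (b ⬝ᵥ c) - (b ⬝ᵥ b) * (a ⬝ᵥ c)) := by
  have hdet := (posSemidef_self_mul_conjTranspose (of ![a, b, c])).det_nonneg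
  have hentry : ∀ i j, (of ![a, b, c] * (of ![a, b, c])ᴴ) i j = ![a, b, c] i ⬝ᵥ ![a, b, c] j :=
    fun i j ↦ rfl
  simp only [det_fin_three, hentry] at hdet
  simp only [Fin.isValue, cons_val_zero, cons_val_one, cons_val_two, head_cons, tail_cons] at hdet
  rw [dotProduct_comm b a, dotProduct_comm c a, dotProduct_comm c b] at hdet
  linear_combination hdet

/-- The oblique projection `v ↦ w = v - (sᵀv / sᵀy) y` has norm at most `‖y‖ ‖s‖ / sᵀy`: the gap
`‖y‖² ‖s‖² ‖v‖² - (sᵀy)² ‖w‖²` is the Gram determinant of `s, v, y` plus `‖s‖² (vᵀy)²`. -/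
theorem sq_dotProduct_mul_dotProduct_self_sub_smul_le (s y v : n → ℝ) :
    (s ⬝ᵥ y) ^ 2 * ((v - ((s ⬝ᵥ v) / (s ⬝ᵥ y)) • y) ⬝ᵥ (v - ((s ⬝ᵥ v) / (s ⬝ᵥ y)) • y))
      ≤ (y ⬝ᵥ y) * (s ⬝ᵥ s) * (v ⬝ᵥ v) := by
  rcases eq_or_ne (s ⬝ᵥ y) 0 with hσ | hσ
  · rw [hσ, sq, zero_mul, zero_mul]
    exact mul_nonneg (mul_nonneg (dotProduct_self_nonneg y) (dotProduct_self_nonneg s))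
      (dotProduct_self_nonneg v)
  have hexpand : (s ⬝ᵥ y) ^ 2 * ((v - ((s ⬝ᵥ v) / (s ⬝ᵥ y)) • y) ⬝ᵥ
      (v - ((s ⬝ᵥ v) / (s ⬝ᵥ y)) • y)) = (s ⬝ᵥ y) ^ 2 * (v ⬝ᵥ v)
        - 2 * (s ⬝ᵥ y) * (s ⬝ᵥ v) * (v ⬝ᵥ y) + (s ⬝ᵥ v) ^ 2 * (y ⬝ᵥ y) := by
    simp only [sub_dotProduct, dotProduct_sub, smul_dotProduct, dotProduct_smul, smul_eq_mul,
      dotProduct_comm y v]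
    field_simp
    ring
  rw [hexpand]
  linarith [gram_det_three_nonneg s v y,
    mul_nonneg (dotProduct_self_nonneg s) (sq_nonneg (v ⬝ᵥ y))]

end DotProduct

section Hermitian

variable {n : Type*} [Fintype n] [DecidableEq n]

theorem IsHermitian.posSemidef_smul_one_sub {A : Matrix n n ℝ} (hA : A.IsHermitian) {M : ℝ}
    (hM : ∀ i, hA.eigenvalues i ≤ M) : (M • 1 - A).PosSemidef := by
  have hdiag : M • (1 : Matrix n n ℝ) - diagonal (RCLike.ofReal ∘ hA.eigenvalues) =
      diagonal fun i ↦ M - hA.eigenvalues i := by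
    ext i j; by_cases h : i = j <;> simp [h, diagonal]
  rw [hA.spectral_theorem, ← map_one (Unitary.conjStarAlgAut ℝ _ hA.eigenvectorUnitary),
    ← map_smul, ← map_sub, hdiag, Unitary.conjStarAlgAut_apply,
    Unitary.isUnit_coe.posSemidef_star_right_conjugate_iff, posSemidef_diagonal_iff]
  exact fun i ↦ sub_nonneg.mpr (hM i)

theorem IsHermitian.dotProduct_mulVec_le {A : Matrix n n ℝ} (hA : A.IsHermitian) {M : ℝ}
    (hM : ∀ i, hA.eigenvalues i ≤ M) (v : n → ℝ) : v ⬝ᵥ A *ᵥ v ≤ M * (v ⬝ᵥ v) := by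
  simpa [sub_mulVec, smul_mulVec, dotProduct_sub] using
    (hA.posSemidef_smul_one_sub hM).dotProduct_mulVec_nonneg v

end Hermitian

section LamMax

variable {m : ℕ}

theorem bddAbove_setOf_mulVec_eq_smul (A : Matrix (Fin m) (Fin m) ℝ) :
    BddAbove {r : ℝ | ∃ v : Fin m → ℝ, v ≠ 0 ∧ A *ᵥ v = r • v} := by
  refine (Module.End.finite_hasEigenvalue (toLin' A)).bddAbove.mono ?_
  rintro r ⟨v, hv, hAv⟩
  exact Module.End.hasEigenvalue_of_hasEigenvector
    ⟨Module.End.mem_eigenspace_iff.mpr (by simpa using hAv), hv⟩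

theorem le_lamMax {A : Matrix (Fin m) (Fin m) ℝ} {r : ℝ} {v : Fin m → ℝ} (hv : v ≠ 0)
    (hAv : A *ᵥ v = r • v) : r ≤ lamMax A :=
  le_csSup (bddAbove_setOf_mulVec_eq_smul A) ⟨v, hv, hAv⟩

theorem lamMax_le_of_forall_dotProduct_mulVec_le {A : Matrix (Fin m) (Fin m) ℝ} {c : ℝ}
    (hc : 0 ≤ c) (h : ∀ v, v ⬝ᵥ A *ᵥ v ≤ c * (v ⬝ᵥ v)) : lamMax A ≤ c := by
  refine Real.sSup_le ?_ hc
  rintro r ⟨v, hv, hAv⟩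
  have := h v
  rw [hAv, dotProduct_smul, smul_eq_mul] at this
  exact le_of_mul_le_mul_right this (dotProduct_self_pos hv)

theorem PosSemidef.lamMax_nonneg {A : Matrix (Fin m) (Fin m) ℝ} (hA : A.PosSemidef) :
    0 ≤ lamMax A := by
  refine Real.sSup_nonneg ?_
  rintro r ⟨v, hv, hAv⟩
  have := hA.dotProduct_mulVec_nonneg v
  rw [star_trivial, hAv, dotProduct_smul, smul_eq_mul] at this
  exact nonneg_of_mul_nonneg_left this (dotProduct_self_pos hv)

theorem IsHermitian.eigenvalues_le_lamMax {A : Matrix (Fin m) (Fin m) ℝ} (hA : A.IsHermitian)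
    (i : Fin m) : hA.eigenvalues i ≤ lamMax A :=
  le_lamMax (by simpa using hA.eigenvectorBasis.orthonormal.ne_zero i)
    (hA.mulVec_eigenvectorBasis i)

theorem IsHermitian.dotProduct_mulVec_le_lamMax_mul {A : Matrix (Fin m) (Fin m) ℝ}
    (hA : A.IsHermitian) (v : Fin m → ℝ) : v ⬝ᵥ A *ᵥ v ≤ lamMax A * (v ⬝ᵥ v) :=
  hA.dotProduct_mulVec_le hA.eigenvalues_le_lamMax v

end LamMax

end Matrix

/-- One-step recursion for the maximal eigenvalue of the inverse BFGS update. -/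
theorem stmt9 {m : ℕ} (P : Matrix (Fin m) (Fin m) ℝ) (hP : P.PosSemidef)
    (s y : Fin m → ℝ) (hsy : 0 < s ⬝ᵥ y) :
    lamMax ((1 - (1 / (s ⬝ᵥ y)) • vecMulVec y s)ᵀ * P *
          (1 - (1 / (s ⬝ᵥ y)) • vecMulVec y s)
        + (1 / (s ⬝ᵥ y)) • vecMulVec s s)
      ≤ lamMax P * ((y ⬝ᵥ y) * (s ⬝ᵥ s) / (s ⬝ᵥ y) ^ 2) + (s ⬝ᵥ s) / (s ⬝ᵥ y) := by
  have hlam := hP.lamMax_nonneg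
  have hS := dotProduct_self_nonneg s
  have hY := dotProduct_self_nonneg y
  refine lamMax_le_of_forall_dotProduct_mulVec_le (by positivity) fun v ↦ ?_
  rw [add_mulVec, dotProduct_add, dotProduct_transpose_mul_mul_mulVec, smul_mulVec,
    dotProduct_smul, dotProduct_vecMulVec_mulVec, one_sub_smul_vecMulVec_mulVec, one_div_mul_eq_div,
    smul_eq_mul]
  set w := v - ((s ⬝ᵥ v) / (s ⬝ᵥ y)) • y
  have hw : w ⬝ᵥ w ≤ (y ⬝ᵥ y) * (s ⬝ᵥ s) / (s ⬝ᵥ y) ^ 2 * (v ⬝ᵥ v) := by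
    rw [div_mul_eq_mul_div, le_div_iff₀' (by positivity)]
    exact sq_dotProduct_mul_dotProduct_self_sub_smul_le s y v
  calc w ⬝ᵥ P *ᵥ w + 1 / (s ⬝ᵥ y) * (s ⬝ᵥ v) ^ 2
      ≤ lamMax P * (w ⬝ᵥ w) + 1 / (s ⬝ᵥ y) * ((s ⬝ᵥ s) * (v ⬝ᵥ v)) := by
        gcongr
        exacts [hP.1.dotProduct_mulVec_le_lamMax_mul w, sq_dotProduct_le s v]
    _ ≤ lamMax P * ((y ⬝ᵥ y) * (s ⬝ᵥ s) / (s ⬝ᵥ y) ^ 2 * (v ⬝ᵥ v))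
        + 1 / (s ⬝ᵥ y) * ((s ⬝ᵥ s) * (v ⬝ᵥ v)) := by gcongr
    _ = _ := by ring
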